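/- Let A be an n×n complex matrix with index k and r = rank A^k. Then for y ∈ ℂⁿ, the Drazin inverse solution x̂ = A^D y of Ax = y has components x̂_i = (Σ_{β ∈ J_{r,n}{i}} |(A^{k+1}_{.i}(g))_β^β|) / (Σ_{β ∈ J_{r,n}} |(A^{k+1})_β^β|), where g = A^k y. -/

import Mathlib

/-!
Put `M = A ^ (k + 1)` and `p(t) = det (1 + t M)`; the coefficient of `t ^ j` in `p` is the sum of
the `j × j` principal minors of `M`. Since `A ^ k = M X`, `M = A ^ k A` and `M = M M X ^ (k + 1)`,
`M` has rank `r` and index at most one, so a rank factorization `M = U V` (with `U` of size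
`n × r`) has `V U` invertible.
Hence `p(t) = det (1 + t V U)` has degree `r` and `t ^ r`-coefficient
`det (V U) ≠ 0`: this is the denominator.

The numerator is the `t ^ r`-coefficient of `det (1 + t M)` with column `i` replaced by `t g`,
which by Cramer's rule is entry `i` of `adj (1 + t M) (t M u) = p(t) u - adj (1 + t M) u`, where
`u = X y` lies in the range of `M` and `g = M u`. Writing `u = U z`, one has
`adj (1 + t M) U = U adj (1 + t V U)`, whose entries have degree `< r`, so this coefficient is
`p_r u_i`.
-/

open Matrix Finset

section Drazin

variable {M : Type*} [Monoid M] {a x : M}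

theorem isIdempotentElem_mul_of_mul_mul_self (hxax : x * a * x = x) :
    IsIdempotentElem (a * x) := by
  rw [IsIdempotentElem, mul_assoc, ← mul_assoc x, hxax]

theorem pow_succ_mul_pow_add_two_of_commute (hxax : x * a * x = x) (hax : Commute a x) (k : ℕ) :
    a ^ (k + 1) * x ^ (k + 2) = x := by
  rw [pow_succ x (k + 1), ← mul_assoc, ← hax.mul_pow,
    (isIdempotentElem_mul_of_mul_mul_self hxax).pow_succ_eq, hax.eq, hxax]

theorem pow_succ_mul_pow_succ_mul_pow_succ_of_commute {k : ℕ} (hk : a ^ (k + 1) * x = a ^ k)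
    (hxax : x * a * x = x) (hax : Commute a x) :
    a ^ (k + 1) * a ^ (k + 1) * x ^ (k + 1) = a ^ (k + 1) := by
  rw [mul_assoc, ← hax.mul_pow, (isIdempotentElem_mul_of_mul_mul_self hxax).pow_succ_eq,
    ← mul_assoc, ← pow_succ, pow_succ', mul_assoc, hk, ← pow_succ']

end Drazin

namespace Matrix

open Polynomial

variable {ι κ R : Type*} [Fintype ι] [DecidableEq ι] [Fintype κ] [DecidableEq κ] [CommRing R]

theorem coeff_det_one_add_X_smul_card (B : Matrix κ κ R) :
    (det (1 + (X : R[X]) • B.map C)).coeff (Fintype.card κ) = det B := by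
  have h := coeff_det_X_add_C_card B 1
  rwa [Matrix.map_one _ (map_zero C) (map_one C), add_comm] at h

theorem coeff_adjugate_one_add_X_smul_card (B : Matrix κ κ R) (a b : κ) :
    (adjugate (1 + (X : R[X]) • B.map C) a b).coeff (Fintype.card κ) = 0 := by
  have hrow : (1 + (X : R[X]) • B.map C).updateRow b (Pi.single a 1)
      = (X : R[X]) • (B.updateRow b 0).map C
        + ((1 : Matrix κ κ R).updateRow b (Pi.single a 1)).map C := by
    ext c d
    by_cases hc : c = b
    · subst hc; simp [Pi.single_apply, apply_ite C]
    · simp [updateRow_ne hc, one_apply, apply_ite C, add_comm]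
  rw [adjugate_apply, hrow, coeff_det_X_add_C_card]
  exact det_eq_zero_of_row_eq_zero b fun d => by simp

theorem det_one_add_X_smul_map_mul_comm (U : Matrix ι κ R) (V : Matrix κ ι R) :
    det (1 + (X : R[X]) • (U * V).map C) = det (1 + (X : R[X]) • (V * U).map C) := by
  rw [Matrix.map_mul, Matrix.map_mul, ← Matrix.mul_smul, det_one_add_mul_comm, Matrix.smul_mul]

theorem sum_filter_mem_det_submatrix_updateCol (M : Matrix ι ι R) (g : ι → R) (i : ι)
    (k : ℕ) :
    ∑ s ∈ univ.powersetCard k with i ∈ s,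
        ((M.updateCol i g).submatrix (Subtype.val : s → ι) Subtype.val).det
      = (det ((1 + (X : R[X]) • M.map C).updateCol i ((X : R[X]) • (C ∘ g)))).coeff k := by
  have hcol : ∀ v : ι → R, 1 + (X : R[X]) • (M.updateCol i v).map C
      = (1 + (X : R[X]) • M.map C).updateCol i (Pi.single i 1 + (X : R[X]) • (C ∘ v)) := by
    intro v
    ext a b
    by_cases hb : b = i
    · subst hb; simp [one_apply, Pi.single_apply]
    · simp [updateCol_ne hb]
  have hdiff : det ((1 + (X : R[X]) • M.map C).updateCol i ((X : R[X]) • (C ∘ g)))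
      = det (1 + (X : R[X]) • (M.updateCol i g).map C)
        - det (1 + (X : R[X]) • (M.updateCol i 0).map C) := by
    rw [hcol, hcol, det_updateCol_add]
    simp
  rw [hdiff, coeff_sub, coeff_det_one_add_X_smul_eq_sum_minors,
    coeff_det_one_add_X_smul_eq_sum_minors, ← sum_sub_distrib, sum_filter]
  refine sum_congr rfl fun s _ => ?_
  split_ifs with hi
  · have hzero : ((M.updateCol i 0).submatrix (Subtype.val : s → ι) Subtype.val).det = 0 :=
      det_eq_zero_of_column_eq_zero ⟨i, hi⟩ fun a => by simp
    rw [hzero, sub_zero]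
  · rw [eq_comm, sub_eq_zero]
    congr 1
    ext a b
    simp [updateCol_ne (show (b : ι) ≠ i from fun h => hi (h ▸ b.prop))]

theorem adjugate_one_add_X_smul_mulVec_X_smul (M : Matrix ι ι R) (u : ι → R) :
    adjugate (1 + (X : R[X]) • M.map C) *ᵥ ((X : R[X]) • (C ∘ (M *ᵥ u)))
      = det (1 + (X : R[X]) • M.map C) • (C ∘ u)
        - adjugate (1 + (X : R[X]) • M.map C) *ᵥ (C ∘ u) := by
  have hmap : C ∘ (M *ᵥ u) = M.map C *ᵥ (C ∘ u) := funext (RingHom.map_mulVec C M u)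
  set N := 1 + (X : R[X]) • M.map C with hN
  have hXM : (X : R[X]) • M.map C = N - 1 := by rw [hN, add_sub_cancel_left]
  rw [hmap, ← smul_mulVec, hXM, sub_mulVec, mulVec_sub, mulVec_mulVec, adjugate_mul, smul_mulVec,
    one_mulVec]

section Domain

variable [IsDomain R]

theorem det_one_add_X_smul_ne_zero (B : Matrix ι ι R) :
    det (1 + (X : R[X]) • B.map C) ≠ 0 := by
  intro h
  have h0 := coeff_det_X_add_C_zero B 1
  rw [Matrix.map_one _ (map_zero C) (map_one C), add_comm, h, det_one] at h0
  exact zero_ne_one h0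

theorem adjugate_one_add_X_smul_mul_comm_mul (U : Matrix ι κ R) (V : Matrix κ ι R) :
    adjugate (1 + (X : R[X]) • (U * V).map C) * U.map C
      = U.map C * adjugate (1 + (X : R[X]) • (V * U).map C) := by
  set N := 1 + (X : R[X]) • (U * V).map C with hN
  set N' := 1 + (X : R[X]) • (V * U).map C with hN'
  have hNU : N * U.map C = U.map C * N' := by
    rw [hN, hN', Matrix.add_mul, Matrix.mul_add, Matrix.one_mul, Matrix.mul_one, Matrix.smul_mul,
      Matrix.mul_smul, Matrix.map_mul, Matrix.map_mul, Matrix.mul_assoc]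
  have hdet : det N = det N' := det_one_add_X_smul_map_mul_comm U V
  refine smul_right_injective _ (det_one_add_X_smul_ne_zero (U * V)) ?_
  calc det N • (adjugate N * U.map C) = adjugate N * U.map C * (N' * adjugate N') := by
        rw [mul_adjugate, ← hdet, Matrix.mul_smul, Matrix.mul_one]
    _ = adjugate N * N * U.map C * adjugate N' := by
        simp only [Matrix.mul_assoc, hNU]
    _ = det N • (U.map C * adjugate N') := by
        rw [adjugate_mul, Matrix.smul_mul, Matrix.one_mul, Matrix.smul_mul]

theorem coeff_adjugate_one_add_X_smul_mul_mulVec (U : Matrix ι κ R) (V : Matrix κ ι R)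
    (z : κ → R) (a : ι) :
    ((adjugate (1 + (X : R[X]) • (U * V).map C) *ᵥ (C ∘ (U *ᵥ z))) a).coeff
      (Fintype.card κ) = 0 := by
  rw [show C ∘ (U *ᵥ z) = U.map C *ᵥ (C ∘ z) from funext (RingHom.map_mulVec C U z),
    mulVec_mulVec, adjugate_one_add_X_smul_mul_comm_mul, ← mulVec_mulVec]
  simp only [mulVec, dotProduct, Function.comp_apply, map_apply, finsetSum_coeff, coeff_C_mul,
    coeff_mul_C, coeff_adjugate_one_add_X_smul_card, zero_mul, sum_const_zero, mul_zero]

end Domain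

section Field

variable {K : Type*} [Field K]

theorem exists_mul_eq_of_rank {m : Type*} (M : Matrix m ι K) :
    ∃ (U : Matrix m (Fin M.rank) K) (V : Matrix (Fin M.rank) ι K), U * V = M := by
  let e : LinearMap.range M.mulVecLin ≃ₗ[K] (Fin M.rank → K) :=
    LinearEquiv.ofFinrankEq _ _ (by rw [Module.finrank_fin_fun]; rfl)
  refine ⟨LinearMap.toMatrix' ((LinearMap.range M.mulVecLin).subtype ∘ₗ e.symm.toLinearMap),
    LinearMap.toMatrix' (e.toLinearMap ∘ₗ M.mulVecLin.rangeRestrict), ?_⟩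
  rw [← LinearMap.toMatrix'_comp]
  convert LinearMap.toMatrix'_toLin' M using 2
  refine LinearMap.ext fun v => ?_
  simp

theorem isUnit_of_rank_eq_card {B : Matrix ι ι K} (h : B.rank = Fintype.card ι) : IsUnit B := by
  rw [← mulVec_surjective_iff_isUnit]
  have : LinearMap.range B.mulVecLin = ⊤ :=
    Submodule.eq_top_of_finrank_eq (by simpa [Matrix.rank] using h)
  exact LinearMap.range_eq_top.mp this

theorem sum_filter_mem_det_submatrix_updateCol_mulVec (M : Matrix ι ι K) {u : ι → K}
    (hu : u ∈ LinearMap.range M.mulVecLin) (i : ι) :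
    ∑ s ∈ univ.powersetCard M.rank with i ∈ s,
        ((M.updateCol i (M *ᵥ u)).submatrix (Subtype.val : s → ι) Subtype.val).det
      = (∑ s ∈ univ.powersetCard M.rank, (M.submatrix (Subtype.val : s → ι) Subtype.val).det)
        * u i := by
  obtain ⟨w, rfl⟩ : ∃ w, M *ᵥ w = u := hu
  obtain ⟨U, V, hUV⟩ := exists_mul_eq_of_rank M
  have hvanish :
      ((adjugate (1 + (X : K[X]) • M.map C) *ᵥ (C ∘ (M *ᵥ w))) i).coeff M.rank = 0 := by
    have h := coeff_adjugate_one_add_X_smul_mul_mulVec U V (V *ᵥ w) i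
    rwa [mulVec_mulVec, hUV, Fintype.card_fin] at h
  rw [sum_filter_mem_det_submatrix_updateCol, ← cramer_apply, cramer_eq_adjugate_mulVec,
    adjugate_one_add_X_smul_mulVec_X_smul, ← coeff_det_one_add_X_smul_eq_sum_minors]
  simp [coeff_sub, hvanish, coeff_mul_C]

theorem sum_det_submatrix_rank_ne_zero (M : Matrix ι ι K) (hM : (M * M).rank = M.rank) :
    ∑ s ∈ univ.powersetCard M.rank,
      (M.submatrix (Subtype.val : s → ι) Subtype.val).det ≠ 0 := by
  obtain ⟨U, V, hUV⟩ := exists_mul_eq_of_rank M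
  have hrank : (V * U).rank = Fintype.card (Fin M.rank) := by
    refine le_antisymm (rank_le_card_width _) ?_
    have hsq : M * M = U * (V * U) * V := by
      calc M * M = U * V * (U * V) := by rw [hUV]
        _ = U * (V * U) * V := by simp only [Matrix.mul_assoc]
    calc Fintype.card (Fin M.rank) = (M * M).rank := by rw [Fintype.card_fin, hM]
      _ = (U * (V * U) * V).rank := by rw [hsq]
      _ ≤ (U * (V * U)).rank := rank_mul_le_left _ _
      _ ≤ (V * U).rank := rank_mul_le_right _ _
  have hdet : det (1 + (X : K[X]) • M.map C) = det (1 + (X : K[X]) • (V * U).map C) := by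
    rw [← det_one_add_X_smul_map_mul_comm, hUV]
  have hcoeff := coeff_det_one_add_X_smul_card (V * U)
  rw [Fintype.card_fin] at hcoeff
  rw [← coeff_det_one_add_X_smul_eq_sum_minors, hdet, hcoeff]
  exact ((isUnit_iff_isUnit_det _).mp (isUnit_of_rank_eq_card hrank)).ne_zero

end Field

section Minors

variable {ι R : Type*} [LinearOrder ι] [CommRing R]

theorem det_submatrix_orderEmbOfFin (B : Matrix ι ι R) (s : Finset ι) {r : ℕ}
    (h : s.card = r) :
    det (B.submatrix (s.orderEmbOfFin h) (s.orderEmbOfFin h))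
      = det (B.submatrix (Subtype.val : s → ι) Subtype.val) := by
  rw [← det_submatrix_equiv_self (s.orderIsoOfFin h).toEquiv]
  rfl

theorem sum_dite_det_submatrix_orderEmbOfFin [Fintype ι] (B : Matrix ι ι R) (r : ℕ) :
    ∑ s : Finset ι, (if h : s.card = r then
        det (B.submatrix (s.orderEmbOfFin h) (s.orderEmbOfFin h)) else 0)
      = ∑ s ∈ univ.powersetCard r, (B.submatrix (Subtype.val : s → ι) Subtype.val).det := by
  simp only [det_submatrix_orderEmbOfFin, dite_eq_ite]
  rw [powersetCard_eq_filter, powerset_univ, sum_filter]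

theorem sum_ite_mem_dite_det_submatrix_orderEmbOfFin [Fintype ι] (B : Matrix ι ι R) (r : ℕ)
    (i : ι) :
    ∑ s : Finset ι, (if i ∈ s then (if h : s.card = r then
        det (B.submatrix (s.orderEmbOfFin h) (s.orderEmbOfFin h)) else 0) else 0)
      = ∑ s ∈ univ.powersetCard r with i ∈ s,
          (B.submatrix (Subtype.val : s → ι) Subtype.val).det := by
  simp only [det_submatrix_orderEmbOfFin, dite_eq_ite]
  rw [sum_filter, powersetCard_eq_filter, powerset_univ, sum_filter]
  exact sum_congr rfl fun s _ => by split_ifs <;> rfl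

end Minors

end Matrix

theorem drazin_solution_cramer_general (n k r : ℕ)
    (A : Matrix (Fin n) (Fin n) ℂ)
    (hr : (A ^ k).rank = r)
    (X : Matrix (Fin n) (Fin n) ℂ)
    (h1 : A ^ (k + 1) * X = A ^ k) (h2 : X * A * X = X) (h3 : A * X = X * A)
    (y : Fin n → ℂ) :
    ∀ i : Fin n,
      X.mulVec y i =
        (∑ β : Finset (Fin n), if i ∈ β then
            (if h : β.card = r then
              det (((A ^ (k + 1)).updateCol i ((A ^ k).mulVec y)).submatrix
                (β.orderEmbOfFin h) (β.orderEmbOfFin h)) else 0) else 0) /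
        (∑ β : Finset (Fin n), if h : β.card = r then
            det ((A ^ (k + 1)).submatrix (β.orderEmbOfFin h) (β.orderEmbOfFin h)) else 0) := by
  intro i
  set M := A ^ (k + 1) with hM
  have hrank : M.rank = r := by
    refine le_antisymm ?_ ?_
    · rw [← hr, hM, pow_succ]
      exact rank_mul_le_left _ _
    · rw [← hr, ← h1]
      exact rank_mul_le_left _ _
  have hindex : (M * M).rank = M.rank := by
    have hMM : M * M * X ^ (k + 1) = M := pow_succ_mul_pow_succ_mul_pow_succ_of_commute h1 h2 h3
    refine le_antisymm (rank_mul_le_left _ _) ?_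
    conv_lhs => rw [← hMM]
    exact rank_mul_le_left _ _
  have hu : X *ᵥ y ∈ LinearMap.range M.mulVecLin :=
    ⟨X ^ (k + 2) *ᵥ y, by
      rw [mulVecLin_apply, mulVec_mulVec, pow_succ_mul_pow_add_two_of_commute h2 h3]⟩
  have hg : A ^ k *ᵥ y = M *ᵥ (X *ᵥ y) := by rw [mulVec_mulVec, h1]
  subst hrank
  rw [sum_ite_mem_dite_det_submatrix_orderEmbOfFin, sum_dite_det_submatrix_orderEmbOfFin, hg,
    sum_filter_mem_det_submatrix_updateCol_mulVec M hu,
    mul_div_cancel_left₀ _ (sum_det_submatrix_rank_ne_zero M hindex)]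

theorem drazin_solution_cramer (n k r : ℕ) (hr1 : 1 ≤ r)
    (A : Matrix (Fin n) (Fin n) ℂ)
    (hk : (A ^ (k + 1)).rank = (A ^ k).rank)
    (hmin : ∀ l < k, (A ^ (l + 1)).rank ≠ (A ^ l).rank)
    (hr : (A ^ k).rank = r)
    (X : Matrix (Fin n) (Fin n) ℂ)
    (h1 : A ^ (k + 1) * X = A ^ k) (h2 : X * A * X = X) (h3 : A * X = X * A)
    (y : Fin n → ℂ) :
    ∀ i : Fin n,
      X.mulVec y i =
        (∑ β : Finset (Fin n), if i ∈ β then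
            (if h : β.card = r then
              det (((A ^ (k + 1)).updateCol i ((A ^ k).mulVec y)).submatrix
                (β.orderEmbOfFin h) (β.orderEmbOfFin h)) else 0) else 0) /
        (∑ β : Finset (Fin n), if h : β.card = r then
            det ((A ^ (k + 1)).submatrix (β.orderEmbOfFin h) (β.orderEmbOfFin h)) else 0) :=
  drazin_solution_cramer_general n k r A hr X h1 h2 h3 y
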